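/- Let Π be a normal logic program and Φ its explicit version, and let ⟨T_{Φ,λ}, F_{Φ,λ}⟩ denote the λ-th element of the transfinite sequence I₀=⟨∅,∅⟩, I_{α+1}=W_Φ(I_α), with componentwise unions at limit ordinals. For every atom b ∈ At(Π) and every ordinal λ ≥ 0: (1) ¬b ∈ T_{Φ,λ} iff there exists κ < λ with b ∈ F_{Φ,κ}; and (2) ¬b ∈ F_{Φ,λ} iff there exists κ < λ with b ∈ T_{Φ,κ}. -/

import Mathlib

namespace DLWFS

universe u

/-- Ground literals over a type `A` of atoms: atoms and their classical complements. -/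
inductive Lit (A : Type u) : Type u where
  | pos : A → Lit A
  | neg : A → Lit A

/-- The classical complement `p̄` of a literal `p`. -/
def Lit.compl {A : Type u} : Lit A → Lit A
  | .pos a => .neg a
  | .neg a => .pos a

/-- The three kinds of rules of a defeasible theory. -/
inductive RuleKind : Type where
  | strict
  | defeasible
  | defeater
deriving DecidableEq

/-- A rule of a defeasible theory: a kind, a body (a set of literals) and a head literal. -/
structure DRule (A : Type u) where
  kind : RuleKind
  body : Set (Lit A)
  head : Lit A

/-- A defeasible theory `D = ⟨R, C, ≺⟩`. -/
structure DTheory (A : Type u) where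
  rules : Set (DRule A)
  conflicts : Set (Set (Lit A))
  prec : DRule A → DRule A → Prop

namespace DTheory

variable {A : Type u}

/-- The strict rules `R_s`. -/
def Rs (D : DTheory A) : Set (DRule A) := {r ∈ D.rules | r.kind = RuleKind.strict}

/-- The defeasible rules `R_d`. -/
def Rd (D : DTheory A) : Set (DRule A) := {r ∈ D.rules | r.kind = RuleKind.defeasible}

/-- The defeater rules `R_u`. -/
def Ru (D : DTheory A) : Set (DRule A) := {r ∈ D.rules | r.kind = RuleKind.defeater}

/-- `C[p]`: the conflict sets containing literal `p`. -/
def Cset (D : DTheory A) (p : Lit A) : Set (Set (Lit A)) := {c ∈ D.conflicts | p ∈ c}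

/-- Structural conditions in the definition of a defeasible theory: a countable set of
rules with finite bodies, a countable set of finite conflict sets containing every
minimal conflict set `{p, ¬p}`, and an acyclic priority relation over non-strict rules. -/
def WellFormed (D : DTheory A) : Prop :=
  D.rules.Countable ∧ D.conflicts.Countable ∧
  (∀ r ∈ D.rules, r.body.Finite) ∧
  (∀ c ∈ D.conflicts, c.Finite) ∧
  (∀ p : A, ({Lit.pos p, Lit.neg p} : Set (Lit A)) ∈ D.conflicts) ∧
  (∀ r s, D.prec r s → r.kind ≠ RuleKind.strict ∧ s.kind ≠ RuleKind.strict) ∧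
  (∀ r, ¬ Relation.TransGen D.prec r r)

/-- `C = C_MIN`: the conflict sets are exactly the minimal ones `{p, ¬p}`. -/
def MinimalConflicts (D : DTheory A) : Prop :=
  D.conflicts = {c | ∃ p : A, c = ({Lit.pos p, Lit.neg p} : Set (Lit A))}

end DTheory

/-- A 3-valued interpretation: a pair `⟨T, F⟩` of sets. -/
abbrev Interp (L : Type u) : Type u := Set L × Set L

variable {A : Type u}

/-- `S` is ADL-unfounded with respect to theory `D` and interpretation `I = ⟨T, F⟩`. -/
def ADLUnfounded (D : DTheory A) (I : Interp (Lit A)) (S : Set (Lit A)) : Prop :=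
  ∀ p ∈ S,
    (∀ r ∈ D.Rs, r.head = p → (r.body ∩ (I.2 ∪ S)).Nonempty) ∧
    (∀ r ∈ D.Rd, r.head = p →
      (r.body ∩ (I.2 ∪ S)).Nonempty ∨
      ∃ c ∈ D.conflicts, p ∈ c ∧
        ∀ q ∈ c \ {p}, ∃ s ∈ D.rules, s.head = q ∧ s.body ⊆ I.1 ∧
          (D.prec r s ∨ s.kind = RuleKind.strict))

/-- `S` is NDL-unfounded with respect to theory `D` and interpretation `I = ⟨T, F⟩`. -/
def NDLUnfounded (D : DTheory A) (I : Interp (Lit A)) (S : Set (Lit A)) : Prop :=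
  ∀ p ∈ S,
    (∀ r ∈ D.Rs, r.head = p → (r.body ∩ (I.2 ∪ S)).Nonempty) ∧
    (∀ r ∈ D.Rd, r.head = p →
      (r.body ∩ (I.2 ∪ S)).Nonempty ∨
      ∃ c ∈ D.conflicts, p ∈ c ∧
        ∀ q ∈ c \ {p}, ∃ s ∈ D.rules, s.head = q ∧ s.body ⊆ I.1 ∧
          ¬ D.prec s r)

/-- `U_D(I)` for ADL: the union of all ADL-unfounded sets. -/
def UA (D : DTheory A) (I : Interp (Lit A)) : Set (Lit A) :=
  ⋃₀ {S | ADLUnfounded D I S}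

/-- `U_D(I)` for NDL: the union of all NDL-unfounded sets. -/
def UN (D : DTheory A) (I : Interp (Lit A)) : Set (Lit A) :=
  ⋃₀ {S | NDLUnfounded D I S}

/-- `T_D(I)`: the literals having a witness of provability with respect to `I = ⟨T, F⟩`. -/
def TD (D : DTheory A) (I : Interp (Lit A)) : Set (Lit A) :=
  {p | ∃ r ∈ D.rules, r.head = p ∧ r.body ⊆ I.1 ∧
    (r.kind = RuleKind.strict ∨
      (r.kind = RuleKind.defeasible ∧
        ∀ c ∈ D.conflicts, p ∈ c →
          ∃ q ∈ c \ {p}, ∀ s ∈ D.rules, s.head = q →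
            (D.prec s r ∨ (s.body ∩ I.2).Nonempty)))}

/-- `W_D` for ADL. -/
def WA (D : DTheory A) (I : Interp (Lit A)) : Interp (Lit A) := (TD D I, UA D I)

/-- `W_D` for NDL. -/
def WN (D : DTheory A) (I : Interp (Lit A)) : Interp (Lit A) := (TD D I, UN D I)

/-- `I` is the well-founded model for the operator `W`: the least fixpoint of `W`
(componentwise order). -/
def IsWFModel {L : Type u} (W : Interp L → Interp L) (I : Interp L) : Prop :=
  W I = I ∧ ∀ J, W J = J → I.1 ⊆ J.1 ∧ I.2 ⊆ J.2

/-- A rule of a normal logic program: `head ← pos, ∼neg`. -/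
structure NRule (A : Type u) where
  head : A
  pos : Set A
  neg : Set A

/-- A normal logic program: a set of rules. -/
abbrev NProgram (A : Type u) : Type u := Set (NRule A)

/-- Structural conditions in the definition of a normal logic program: a countable
set of ground rules with finite bodies. -/
def NProgram.WellFormed (P : NProgram A) : Prop :=
  P.Countable ∧ ∀ r ∈ P, r.pos.Finite ∧ r.neg.Finite

/-- The immediate consequence operator `T_Π` on 3-valued interpretations. -/
def TP (P : NProgram A) (I : Interp A) : Set A :=
  {a | ∃ r ∈ P, r.head = a ∧ r.pos ⊆ I.1 ∧ r.neg ⊆ I.2}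

/-- `S` is an unfounded set of program `P` with respect to interpretation `I = ⟨T, F⟩`. -/
def PUnfounded (P : NProgram A) (I : Interp A) (S : Set A) : Prop :=
  ∀ p ∈ S, ∀ r ∈ P, r.head = p →
    (r.pos ∩ (I.2 ∪ S)).Nonempty ∨ (r.neg ∩ I.1).Nonempty

/-- `U_Π(I)`: the greatest unfounded set (union of all unfounded sets). -/
def UP (P : NProgram A) (I : Interp A) : Set A :=
  ⋃₀ {S | PUnfounded P I S}

/-- `W_Π(I) = ⟨T_Π(I), U_Π(I)⟩`. -/
def WP (P : NProgram A) (I : Interp A) : Interp A := (TP P I, UP P I)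

/-- Transfinite iteration of an operator `W` from `⊥`, taking suprema at limit ordinals. -/
noncomputable def iterW {α : Type*} [CompleteLattice α] (W : α → α) : Ordinal.{0} → α :=
  fun o =>
    Ordinal.limitRecOn (motive := fun _ => α) o ⊥ (fun _ ih => W ih)
      (fun o' _ ih => ⨆ x : Set.Iio o', ih x.1 x.2)

/-- One step of the immediate consequence operator for a set of defeasible-theory rules. -/
def TRstep (R : Set (DRule A)) (S : Set (Lit A)) : Set (Lit A) :=
  {p | ∃ r ∈ R, r.head = p ∧ r.body ⊆ S}

/-- The finite iterates `T_R ↑ n`. -/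
def TRiter (R : Set (DRule A)) : ℕ → Set (Lit A)
  | 0 => ∅
  | n + 1 => TRstep R (TRiter R n)

/-- `Cl(R) = T_R ↑ ω`. -/
def ClR (R : Set (DRule A)) : Set (Lit A) := ⋃ n, TRiter R n

/-- The `α`-reduct `D_α^S` of a defeasible theory. -/
def alphaReduct (D : DTheory A) (S : Set (Lit A)) : Set (DRule A) :=
  D.Rs ∪ {r ∈ D.Rd | ∀ c ∈ D.conflicts, r.head ∈ c → ∃ q ∈ c \ {r.head}, q ∉ S}

/-- The ambiguity-propagating operator `α_D(S) = Cl(D_α^S)`. -/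
def alphaOp (D : DTheory A) (S : Set (Lit A)) : Set (Lit A) := ClR (alphaReduct D S)

/-- The `β`-reduct `D_β^S` of a defeasible theory. -/
def betaReduct (D : DTheory A) (S : Set (Lit A)) : Set (DRule A) :=
  D.Rs ∪ {r ∈ D.Rd | ∀ c ∈ D.conflicts, r.head ∈ c →
    ∃ q ∈ c \ {r.head}, ∀ s ∈ D.rules, s.head = q → (¬ s.body ⊆ S ∨ D.prec s r)}

/-- The ambiguity-blocking operator `β_D(S) = Cl(D_β^S)`. -/
def betaOp (D : DTheory A) (S : Set (Lit A)) : Set (Lit A) := ClR (betaReduct D S)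

/-- `S` is an `α`-stable set of `D`. -/
def AlphaStable (D : DTheory A) (S : Set (Lit A)) : Prop := alphaOp D S = S

/-- `S` is a `β`-stable set of `D`. -/
def BetaStable (D : DTheory A) (S : Set (Lit A)) : Prop := betaOp D S = S

/-- The sequence `X_D↑λ`: `X↑0 = ∅`, `X↑(λ+1) = β_D(β_D(X↑λ))`, unions at limits. -/
noncomputable def Xseq (D : DTheory A) : Ordinal.{0} → Set (Lit A) :=
  iterW (fun S => betaOp D (betaOp D S))

/-- The Gelfond–Lifschitz reduct `Π^S`. -/
def glReduct (P : NProgram A) (S : Set A) : NProgram A :=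
  {r' | ∃ r ∈ P, r.neg ∩ S = ∅ ∧ r' = NRule.mk r.head r.pos ∅}

/-- One step of the immediate consequence operator for a NAF-free program. -/
def TPstep (P : NProgram A) (S : Set A) : Set A :=
  {a | ∃ r ∈ P, r.head = a ∧ r.pos ⊆ S}

/-- The finite iterates `T_Π ↑ n` of a NAF-free program. -/
def TPiter (P : NProgram A) : ℕ → Set A
  | 0 => ∅
  | n + 1 => TPstep P (TPiter P n)

/-- `Cl(Π) = T_Π ↑ ω`. -/
def ClP (P : NProgram A) : Set A := ⋃ n, TPiter P n

/-- The Gelfond–Lifschitz operator `γ_Π(S) = Cl(Π^S)`. -/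
def gamma (P : NProgram A) (S : Set A) : Set A := ClP (glReduct P S)

/-- `S` is a stable model of `P`. -/
def StableModel (P : NProgram A) (S : Set A) : Prop := gamma P S = S

/-- `Prod(C[p])`: all sets obtained by choosing one literal other than `p` from each
conflict set containing `p`. -/
def ProdC (D : DTheory A) (p : Lit A) : Set (Set (Lit A)) :=
  {Q | ∃ f : Set (Lit A) → Lit A,
    (∀ c ∈ D.conflicts, p ∈ c → f c ∈ c \ {p}) ∧
    Q = f '' {c ∈ D.conflicts | p ∈ c}}

/-- The logic program translation `Π_D` of a defeasible theory `D` (negative literals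
are treated as fresh atoms, so the atoms of the program are the literals of `D`). -/
def lpTrans (D : DTheory A) : NProgram (Lit A) :=
  {r' | ∃ r ∈ D.Rs, r' = NRule.mk r.head r.body ∅} ∪
  {r' | ∃ r ∈ D.Rd, ∃ Q ∈ ProdC D r.head, r' = NRule.mk r.head r.body Q}

/-- The explicit version `Φ` of a normal program `Π`: atoms of `Φ` are the literals
over the atoms of `Π` (`¬p` being a fresh atom). -/
def explicitVer (P : NProgram A) : NProgram (Lit A) :=
  {r' | ∃ r ∈ P, r' = NRule.mk (Lit.pos r.head) (Lit.pos '' r.pos ∪ Lit.neg '' r.neg) ∅} ∪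
  {r' | ∃ p : A, r' = NRule.mk (Lit.neg p) ∅ {Lit.pos p}}

/-- The minimal conflict sets over atom type `A`. -/
def CMin (A : Type u) : Set (Set (Lit A)) :=
  {c | ∃ p : A, c = ({Lit.pos p, Lit.neg p} : Set (Lit A))}

/-- The defeasible theory translation `D_Π` of a normal program `Π`: each program rule
becomes a strict rule (default literals `∼b` becoming negative literals `¬b`), and each
atom `p` yields a presumption `∅ ⇒ ¬p`; conflict sets are minimal and `≺` is empty. -/
def dtTrans (P : NProgram A) : DTheory A :=
  { rules :=
      {e | ∃ r ∈ P, e = DRule.mk RuleKind.strict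
            (Lit.pos '' r.pos ∪ Lit.neg '' r.neg) (Lit.pos r.head)} ∪
      {e | ∃ p : A, e = DRule.mk RuleKind.defeasible ∅ (Lit.neg p)}
    conflicts := CMin A
    prec := fun _ _ => False }

/-- `M^¬ = M ∪ {¬p : p ∉ M}`, atoms being identified with positive literals. -/
def negCompl (M : Set A) : Set (Lit A) :=
  Lit.pos '' M ∪ Lit.neg '' {p | p ∉ M}

end DLWFS

/-!
The only rule of `Φ` with head `¬b` is `¬b ← ∼b`. Hence `¬b ∈ T_Φ(I)` iff `b ∈ F`, and
`¬b ∈ U_Φ(I)` iff `b ∈ T` (in which case `{¬b}` is itself unfounded). Since `W_Φ` is monotone,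
so is the iteration, and then `I_λ = ⨆_{κ<λ} W_Φ(I_κ)` at every ordinal `λ`, successor or limit;
reading off the components of this supremum gives both equivalences.
-/

namespace DLWFS

section Iteration

variable {α : Type*} [CompleteLattice α] (W : α → α)

theorem iterW_zero : iterW W 0 = ⊥ :=
  Ordinal.limitRecOn_zero _ _ _

theorem iterW_succ (o : Ordinal) : iterW W (Order.succ o) = W (iterW W o) := by
  rw [Order.succ_eq_add_one]
  exact Ordinal.limitRecOn_add_one _ _ _ _

theorem iterW_of_isSuccLimit {o : Ordinal} (ho : Order.IsSuccLimit o) :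
    iterW W o = ⨆ k < o, iterW W k := by
  rw [iSup_subtype']
  exact Ordinal.limitRecOn_limit _ _ _ _ ho

variable {W}

theorem iterW_eq_iSup_lt (hW : Monotone W) (o : Ordinal) :
    iterW W o = ⨆ k < o, W (iterW W k) := by
  induction o using WellFoundedLT.induction with
  | _ o IH =>
    have mono_below : ∀ k a, k ≤ a → a < o → iterW W k ≤ iterW W a := fun k a hka hao => by
      rw [IH k (hka.trans_lt hao), IH a hao]
      exact biSup_mono fun j hj => hj.trans_le hka
    rcases Ordinal.zero_or_succ_or_isSuccLimit o with rfl | ⟨a, rfl⟩ | hlim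
    · simp [iterW_zero]
    · rw [iterW_succ]
      refine le_antisymm (le_iSup₂_of_le a (Order.lt_succ a) le_rfl) (iSup₂_le fun k hk => ?_)
      exact hW (mono_below k a (Order.lt_succ_iff.mp hk) (Order.lt_succ a))
    · rw [iterW_of_isSuccLimit W hlim]
      refine le_antisymm (iSup₂_le fun k hk => ?_) (iSup₂_le fun k hk => ?_)
      · rw [IH k hk]
        exact biSup_mono fun j hj => hj.trans hk
      · rw [← iterW_succ W k]
        exact le_iSup₂_of_le (Order.succ k) (hlim.succ_lt hk) le_rfl

end Iteration

theorem mem_fst_iterW_iff {L : Type*} {W : Interp L → Interp L} (hW : Monotone W)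
    {o : Ordinal} {x : L} : x ∈ (iterW W o).1 ↔ ∃ k < o, x ∈ (W (iterW W k)).1 := by
  simp [iterW_eq_iSup_lt hW o, Prod.fst_iSup]

theorem mem_snd_iterW_iff {L : Type*} {W : Interp L → Interp L} (hW : Monotone W)
    {o : Ordinal} {x : L} : x ∈ (iterW W o).2 ↔ ∃ k < o, x ∈ (W (iterW W k)).2 := by
  simp [iterW_eq_iSup_lt hW o, Prod.snd_iSup]

section WellFoundedOperator

variable {A : Type*} (P : NProgram A)

theorem TP_mono : Monotone (TP P) := by
  rintro I J hIJ a ⟨r, hr, rfl, hpos, hneg⟩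
  exact ⟨r, hr, rfl, hpos.trans hIJ.1, hneg.trans hIJ.2⟩

theorem PUnfounded.mono {I J : Interp A} (hIJ : I ≤ J) {S : Set A} (hS : PUnfounded P I S) :
    PUnfounded P J S := by
  intro p hp r hr hh
  rcases hS p hp r hr hh with ⟨q, hq, hqFS⟩ | ⟨q, hq, hqT⟩
  · exact Or.inl ⟨q, hq, hqFS.imp_left fun h => hIJ.2 h⟩
  · exact Or.inr ⟨q, hq, hIJ.1 hqT⟩

theorem UP_mono : Monotone (UP P) :=
  fun _ _ hIJ => Set.sUnion_mono fun _ => PUnfounded.mono P hIJ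

theorem WP_mono : Monotone (WP P) :=
  fun _ _ hIJ => ⟨TP_mono P hIJ, UP_mono P hIJ⟩

end WellFoundedOperator

section ExplicitVersion

variable {A : Type*} (P : NProgram A)

theorem mem_explicitVer_and_head_eq_neg_iff {r : NRule (Lit A)} {b : A} :
    r ∈ explicitVer P ∧ r.head = Lit.neg b ↔ r = ⟨Lit.neg b, ∅, {Lit.pos b}⟩ := by
  constructor
  · rintro ⟨⟨s, -, rfl⟩ | ⟨p, rfl⟩, hh⟩
    · cases hh
    · cases hh
      rfl
  · rintro rfl
    exact ⟨Or.inr ⟨b, rfl⟩, rfl⟩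

theorem neg_mem_TP_explicitVer (I : Interp (Lit A)) (b : A) :
    Lit.neg b ∈ TP (explicitVer P) I ↔ Lit.pos b ∈ I.2 := by
  constructor
  · rintro ⟨r, hr, hh, -, hneg⟩
    obtain rfl := (mem_explicitVer_and_head_eq_neg_iff P).mp ⟨hr, hh⟩
    exact hneg rfl
  · intro hb
    obtain ⟨hr, hh⟩ := (mem_explicitVer_and_head_eq_neg_iff P (b := b)).mpr rfl
    exact ⟨_, hr, hh, Set.empty_subset _, Set.singleton_subset_iff.mpr hb⟩

theorem neg_mem_UP_explicitVer (I : Interp (Lit A)) (b : A) :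
    Lit.neg b ∈ UP (explicitVer P) I ↔ Lit.pos b ∈ I.1 := by
  obtain ⟨hr, hh⟩ := (mem_explicitVer_and_head_eq_neg_iff P (b := b)).mpr rfl
  constructor
  · rintro ⟨S, hS, hbS⟩
    rcases hS _ hbS _ hr hh with ⟨q, hq, -⟩ | ⟨q, rfl, hqT⟩
    · exact absurd hq (Set.notMem_empty q)
    · exact hqT
  · intro hb
    refine ⟨{Lit.neg b}, ?_, rfl⟩
    rintro p rfl r hr hh
    obtain rfl := (mem_explicitVer_and_head_eq_neg_iff P).mp ⟨hr, hh⟩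
    exact Or.inr ⟨Lit.pos b, rfl, hb⟩

end ExplicitVersion

theorem explicit_version_neg_lit_general {A : Type*} (P : NProgram A) :
    ∀ (b : A) (lam : Ordinal),
      (Lit.neg b ∈ (iterW (WP (explicitVer P)) lam).1 ↔
        ∃ kap < lam, Lit.pos b ∈ (iterW (WP (explicitVer P)) kap).2) ∧
      (Lit.neg b ∈ (iterW (WP (explicitVer P)) lam).2 ↔
        ∃ kap < lam, Lit.pos b ∈ (iterW (WP (explicitVer P)) kap).1) := by
  intro b lam
  rw [mem_fst_iterW_iff (WP_mono _), mem_snd_iterW_iff (WP_mono _)]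
  exact ⟨exists_congr fun _ => and_congr_right' (neg_mem_TP_explicitVer P _ b),
    exists_congr fun _ => and_congr_right' (neg_mem_UP_explicitVer P _ b)⟩

/-- Let `Π` be a normal program and `Φ` its explicit version, and `⟨T_{Φ,λ}, F_{Φ,λ}⟩`
the λ-th element of the sequence `I₀ = ⟨∅,∅⟩`, `I_{α+1} = W_Φ(I_α)`, with componentwise
unions at limits. For every atom `b` and ordinal `λ`:
`¬b ∈ T_{Φ,λ}` iff `∃ κ < λ, b ∈ F_{Φ,κ}`, and `¬b ∈ F_{Φ,λ}` iff `∃ κ < λ, b ∈ T_{Φ,κ}`. -/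
theorem explicit_version_neg_lit {A : Type*} (P : NProgram A) (hwf : P.WellFormed) :
    ∀ (b : A) (lam : Ordinal),
      (Lit.neg b ∈ (iterW (WP (explicitVer P)) lam).1 ↔
        ∃ kap < lam, Lit.pos b ∈ (iterW (WP (explicitVer P)) kap).2) ∧
      (Lit.neg b ∈ (iterW (WP (explicitVer P)) lam).2 ↔
        ∃ kap < lam, Lit.pos b ∈ (iterW (WP (explicitVer P)) kap).1) :=
  explicit_version_neg_lit_general P

end DLWFS
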